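/- Let n ≥ 1, let 0 ≤ r ≤ n−1, and let κ ∈ ℝ^n satisfy σ_i(κ) > 0 for all 1 ≤ i ≤ r+1. Then σ_1(κ)·σ_{r+1}(κ) − (r+2)·σ_{r+2}(κ) > 0, where σ_{r+2}(κ) is understood to be 0 if r+2 > n. Equivalently, writing H_j(κ) = σ_j(κ)/C(n,j), one has σ_1σ_{r+1} − (r+2)σ_{r+2} = C(n,r+1)·[(r+1)H_1H_{r+1} + (n−r−1)(H_1H_{r+1} − H_{r+2})] > 0. -/

import Mathlib

/-!
Newton's inequalities `H_k H_{k+2} ≤ H_{k+1}²` hold for every real `κ`. With `n = k + 2`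
variables they are Cauchy–Schwarz for the products `P_i = ∏_{j ≠ i} κ_j`: these sum to
`σ_{k+1}`, and their pairwise products are `σ_{k+2}` times the `k`-fold products. More variables
reduce to fewer: by Rolle's theorem the derivative of `∏ (X - κ_i)` has `n - 1` real roots, and
by Vieta their normalized means `H_j` (`j < n`) are those of `κ`.

If `H_1, …, H_{r+1} > 0`, Newton's inequalities chain to `H_{r+2} ≤ H_1 H_{r+1}`, which makes
the bracket in the identity positive. The identity itself is `σ_j = C(n,j) H_j` together with
`(r+2) C(n,r+2) = (n-r-1) C(n,r+1)`.
-/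

open Finset

/-- The `r`-th elementary symmetric polynomial of `κ = (κ_1, …, κ_n)`
(equal to `0` when `r > n`). -/
noncomputable def esymm (n : ℕ) (κ : Fin n → ℝ) (r : ℕ) : ℝ :=
  ∑ s ∈ powersetCard r (univ : Finset (Fin n)), ∏ i ∈ s, κ i

/-- The normalized `r`-th mean curvature `H_r(κ) = σ_r(κ) / C(n,r)`. -/
noncomputable def Hmc (n : ℕ) (κ : Fin n → ℝ) (r : ℕ) : ℝ :=
  esymm n κ r / (n.choose r)

namespace Finset

variable {ι M : Type*} [DecidableEq ι] [AddCommMonoid M]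

theorem sum_powersetCard_of_card_eq_succ {s : Finset ι} {j : ℕ} (hs : #s = j + 1)
    (f : Finset ι → M) : ∑ T ∈ powersetCard j s, f T = ∑ i ∈ s, f (s.erase i) := by
  refine (sum_bij (fun i _ => s.erase i) (fun i hi => ?_)
    (fun i hi i' hi' h => s.erase_injOn hi hi' h) (fun T hT => ?_) fun _ _ => rfl).symm
  · simp [mem_powersetCard, erase_subset, card_erase_of_mem hi, hs]
  · obtain ⟨hTs, hTcard⟩ := mem_powersetCard.1 hT
    obtain ⟨a, haT, rfl⟩ := exists_eq_insert_iff.2 ⟨hTs, by omega⟩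
    exact ⟨a, mem_insert_self a T, erase_insert haT⟩

theorem sum_sum_powersetCard_erase (s : Finset ι) (j : ℕ) (f : Finset ι → M) :
    ∑ i ∈ s, ∑ T ∈ powersetCard j (s.erase i), f T
      = (#s - j) • ∑ T ∈ powersetCard j s, f T := by
  calc ∑ i ∈ s, ∑ T ∈ powersetCard j (s.erase i), f T
      = ∑ i ∈ s, ∑ T ∈ powersetCard j s, if i ∉ T then f T else 0 := by
        refine sum_congr rfl fun i _ => ?_
        rw [← sum_filter]
        congr 1
        ext T
        simp only [mem_powersetCard, subset_erase, mem_filter]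
        tauto
    _ = ∑ T ∈ powersetCard j s, (#s - j) • f T := by
        rw [sum_comm]
        refine sum_congr rfl fun T hT => ?_
        obtain ⟨hTs, hTcard⟩ := mem_powersetCard.1 hT
        rw [← sum_filter, sum_const, filter_notMem_eq_sdiff, card_sdiff_of_subset hTs, hTcard]
    _ = (#s - j) • ∑ T ∈ powersetCard j s, f T := smul_sum.symm

theorem sq_sum_sub_sum_sq_eq_sum_sum_erase {R : Type*} [CommRing R] (s : Finset ι)
    (P : ι → R) :
    (∑ i ∈ s, P i) ^ 2 - ∑ i ∈ s, P i ^ 2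
      = ∑ i ∈ s, ∑ j ∈ s.erase i, P i * P j := by
  rw [sq, sum_mul_sum, ← sum_sub_distrib]
  refine sum_congr rfl fun i hi => ?_
  rw [← add_sum_erase s _ hi]
  ring

theorem prod_erase_mul_prod_erase {R : Type*} [CommMonoid R] {s : Finset ι} {i j : ι}
    (hi : i ∈ s) (hj : j ∈ s.erase i) (x : ι → R) :
    (∏ l ∈ s.erase i, x l) * ∏ l ∈ s.erase j, x l
      = (∏ l ∈ s, x l) * ∏ l ∈ (s.erase i).erase j, x l := by
  have hij : i ∈ s.erase j := mem_erase.2 ⟨(ne_of_mem_erase hj).symm, hi⟩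
  rw [← mul_prod_erase _ _ hj, ← mul_prod_erase _ _ hij, ← mul_prod_erase _ _ hi,
    ← mul_prod_erase _ _ hj, erase_right_comm]
  ac_rfl

theorem two_mul_sum_powersetCard_mul_prod_le {s : Finset ι} {k : ℕ} (hs : #s = k + 2)
    (x : ι → ℝ) :
    2 * (k + 2) * ((∑ T ∈ powersetCard k s, ∏ i ∈ T, x i) * ∏ i ∈ s, x i)
      ≤ (k + 1) * (∑ T ∈ powersetCard (k + 1) s, ∏ i ∈ T, x i) ^ 2 := by
  set P : ι → ℝ := fun i => ∏ l ∈ s.erase i, x l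
  have hsum : ∑ T ∈ powersetCard (k + 1) s, ∏ i ∈ T, x i = ∑ i ∈ s, P i :=
    sum_powersetCard_of_card_eq_succ hs _
  have hpairs : ∑ i ∈ s, ∑ j ∈ s.erase i, P i * P j
      = 2 * ((∑ T ∈ powersetCard k s, ∏ i ∈ T, x i) * ∏ i ∈ s, x i) := by
    calc ∑ i ∈ s, ∑ j ∈ s.erase i, P i * P j
        = ∑ i ∈ s, (∏ l ∈ s, x l) *
            ∑ T ∈ powersetCard k (s.erase i), ∏ l ∈ T, x l := by
          refine sum_congr rfl fun i hi => ?_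
          rw [sum_powersetCard_of_card_eq_succ (by rw [card_erase_of_mem hi, hs]; rfl), mul_sum]
          exact sum_congr rfl fun j hj => prod_erase_mul_prod_erase hi hj x
      _ = _ := by
          rw [← mul_sum, sum_sum_powersetCard_erase, hs, show k + 2 - k = 2 by omega,
            nsmul_eq_mul]
          push_cast
          ring
  have hcs : (∑ i ∈ s, P i) ^ 2 ≤ (k + 2) * ∑ i ∈ s, P i ^ 2 := by
    simpa [hs] using sq_sum_le_card_mul_sum_sq (s := s) (f := P)
  rw [hsum]
  linear_combination
    hcs - ((k : ℝ) + 2) * ((sq_sum_sub_sum_sq_eq_sum_sum_erase s P).trans hpairs)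

end Finset

namespace Multiset

noncomputable def esymmMean (s : Multiset ℝ) (j : ℕ) : ℝ :=
  s.esymm j / (card s).choose j

theorem esymm_eq_zero_of_card_lt {R : Type*} [CommSemiring R] {s : Multiset R} {j : ℕ}
    (h : card s < j) : s.esymm j = 0 := by
  simp [esymm, powersetCard_eq_empty j h]

theorem esymmMean_mul_esymmMean_le_sq_of_card_eq {s : Multiset ℝ} {k : ℕ}
    (hs : card s = k + 2) :
    s.esymmMean k * s.esymmMean (k + 2) ≤ s.esymmMean (k + 1) ^ 2 := by
  have hbase : 2 * (k + 2) * (s.esymm k * s.esymm (k + 2)) ≤ (k + 1) * s.esymm (k + 1) ^ 2 := by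
    obtain ⟨l⟩ := s
    have hl : (Quot.mk _ l : Multiset ℝ) = univ.val.map l.get := by
      rw [Fin.univ_val_map, List.ofFn_get]; rfl
    have hcard : #(univ : Finset (Fin l.length)) = k + 2 := by simpa using hs
    rw [hl]
    simp only [Finset.esymm_map_val]
    rw [← hcard, Finset.powersetCard_self, Finset.sum_singleton]
    exact two_mul_sum_powersetCard_mul_prod_le hcard _
  have hC : ((k + 2).choose k : ℝ) = (k + 2) * (k + 1) / 2 := by
    rw [Nat.choose_symm_add, Nat.cast_choose_two]
    push_cast
    ring
  simp only [esymmMean, hs, hC, Nat.choose_self, Nat.choose_succ_self_right, Nat.cast_one,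
    div_one]
  push_cast
  rw [div_pow, div_mul_eq_mul_div, div_le_div_iff₀ (by positivity) (by positivity)]
  linear_combination ((k + 2) / 2 : ℝ) * hbase

open Polynomial in
theorem exists_mul_esymm_eq_of_card_eq_succ {s : Multiset ℝ} {m : ℕ}
    (hs : card s = m + 1) :
    ∃ t : Multiset ℝ, card t = m ∧
      ∀ j ≤ m, ((m : ℝ) + 1) * t.esymm j = ((m : ℝ) + 1 - j) * s.esymm j := by
  set p := (s.map fun a => X - C a).prod
  have hp_deg : p.natDegree = m + 1 := (natDegree_multiset_prod_X_sub_C_eq_card s).trans hs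
  have hq_deg : (derivative p).natDegree = m := by simp [hp_deg]
  have hq_roots : card (derivative p).roots = m := by
    refine le_antisymm ((card_roots' _).trans hq_deg.le) ?_
    have := card_roots_le_derivative p
    rw [roots_multiset_prod_X_sub_C, hs] at this
    omega
  refine ⟨_, hq_roots, fun j hj => ?_⟩
  have vieta := coeff_eq_esymm_roots_of_card (hq_roots.trans hq_deg.symm) (k := m - j) (by omega)
  rw [coeff_derivative, prod_X_sub_C_coeff s (k := m - j + 1) (by omega), leadingCoeff_derivative,
    (monic_multiset_prod_of_monic _ _ fun a _ => monic_X_sub_C a).leadingCoeff, hq_deg, hp_deg,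
    hs, show m + 1 - (m - j + 1) = j by omega, show m - (m - j) = j by omega,
    Nat.cast_sub hj] at vieta
  push_cast at vieta
  refine mul_left_cancel₀ (pow_ne_zero j (neg_ne_zero.2 one_ne_zero) : (-1 : ℝ) ^ j ≠ 0) ?_
  linear_combination -vieta

theorem exists_esymmMean_eq_of_card_eq_succ {s : Multiset ℝ} {m : ℕ} (hs : card s = m + 1) :
    ∃ t : Multiset ℝ, card t = m ∧ ∀ j ≤ m, t.esymmMean j = s.esymmMean j := by
  obtain ⟨t, ht, hrel⟩ := exists_mul_esymm_eq_of_card_eq_succ hs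
  refine ⟨t, ht, fun j hj => ?_⟩
  have hchoose : (m.choose j : ℝ) * (m + 1) = (m + 1).choose j * ((m : ℝ) + 1 - j) := by
    have h := congrArg (Nat.cast (R := ℝ)) (Nat.choose_mul_succ_eq m j)
    push_cast [Nat.cast_sub (by omega : j ≤ m + 1)] at h
    exact h
  have hm : (m.choose j : ℝ) ≠ 0 := by exact_mod_cast (Nat.choose_pos hj).ne'
  have hm1 : ((m + 1).choose j : ℝ) ≠ 0 := by exact_mod_cast (Nat.choose_pos (by omega)).ne'
  rw [esymmMean, esymmMean, ht, hs, div_eq_div_iff hm hm1]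
  refine mul_left_cancel₀ (by positivity : (m : ℝ) + 1 ≠ 0) ?_
  linear_combination ((m + 1).choose j : ℝ) * hrel j hj - s.esymm j * hchoose

theorem esymmMean_mul_esymmMean_le_sq (s : Multiset ℝ) (k : ℕ) :
    s.esymmMean k * s.esymmMean (k + 2) ≤ s.esymmMean (k + 1) ^ 2 := by
  rcases lt_or_ge (card s) (k + 2) with hs | hs
  · simp [esymmMean, esymm_eq_zero_of_card_lt hs, sq_nonneg]
  suffices ∀ m, k + 2 ≤ m → ∀ s : Multiset ℝ, card s = m →
      s.esymmMean k * s.esymmMean (k + 2) ≤ s.esymmMean (k + 1) ^ 2 from this _ hs s rfl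
  intro m hm
  induction m, hm using Nat.le_induction with
  | base => exact fun s hs => esymmMean_mul_esymmMean_le_sq_of_card_eq hs
  | succ m hm ih =>
    intro s hs
    obtain ⟨t, ht, hmean⟩ := exists_esymmMean_eq_of_card_eq_succ hs
    rw [← hmean k (by omega), ← hmean (k + 1) (by omega), ← hmean (k + 2) (by omega)]
    exact ih t ht

end Multiset

theorem Hmc_eq_esymmMean (n : ℕ) (κ : Fin n → ℝ) (j : ℕ) :
    Hmc n κ j = (univ.val.map κ).esymmMean j := by
  simp only [Hmc, esymm, Multiset.esymmMean, Finset.esymm_map_val, Multiset.card_map, card_val,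
    card_univ, Fintype.card_fin]

theorem Hmc_zero (n : ℕ) (κ : Fin n → ℝ) : Hmc n κ 0 = 1 := by
  simp [Hmc, esymm]

theorem esymm_eq_choose_mul_Hmc (n : ℕ) (κ : Fin n → ℝ) (j : ℕ) :
    esymm n κ j = n.choose j * Hmc n κ j := by
  rcases le_or_gt j n with h | h
  · rw [Hmc, mul_div_cancel₀ _ (by exact_mod_cast (Nat.choose_pos h).ne')]
  · have hempty : powersetCard j (univ : Finset (Fin n)) = ∅ :=
      powersetCard_eq_empty.2 (by simpa)
    rw [Nat.choose_eq_zero_of_lt h, Nat.cast_zero, zero_mul, esymm, hempty, sum_empty]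

theorem Hmc_mul_Hmc_le_sq (n : ℕ) (κ : Fin n → ℝ) (k : ℕ) :
    Hmc n κ k * Hmc n κ (k + 2) ≤ Hmc n κ (k + 1) ^ 2 := by
  simp only [Hmc_eq_esymmMean]
  exact Multiset.esymmMean_mul_esymmMean_le_sq _ k

theorem Hmc_succ_le_Hmc_one_mul {n : ℕ} {κ : Fin n → ℝ} {K : ℕ}
    (hpos : ∀ j ≤ K, 0 < Hmc n κ j) : Hmc n κ (K + 1) ≤ Hmc n κ 1 * Hmc n κ K := by
  induction K with
  | zero => rw [Hmc_zero, mul_one]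
  | succ K ih =>
    have ih := ih fun j hj => hpos j (by omega)
    refine le_of_mul_le_mul_left ?_ (hpos K (by omega))
    calc Hmc n κ K * Hmc n κ (K + 2) ≤ Hmc n κ (K + 1) * Hmc n κ (K + 1) := by
          rw [← sq]; exact Hmc_mul_Hmc_le_sq n κ K
      _ ≤ Hmc n κ (K + 1) * (Hmc n κ 1 * Hmc n κ K) :=
          mul_le_mul_of_nonneg_left ih (hpos (K + 1) le_rfl).le
      _ = Hmc n κ K * (Hmc n κ 1 * Hmc n κ (K + 1)) := by ring

theorem esymm_one_mul_sub_eq_choose_mul {n r : ℕ} (hrn : r + 1 ≤ n) (κ : Fin n → ℝ) :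
    esymm n κ 1 * esymm n κ (r + 1) - ((r : ℝ) + 2) * esymm n κ (r + 2)
      = (n.choose (r + 1) : ℝ) *
          (((r : ℝ) + 1) * Hmc n κ 1 * Hmc n κ (r + 1)
            + ((n : ℝ) - r - 1) * (Hmc n κ 1 * Hmc n κ (r + 1) - Hmc n κ (r + 2))) := by
  have hchoose : ((r : ℝ) + 2) * n.choose (r + 2) = ((n : ℝ) - r - 1) * n.choose (r + 1) := by
    have h := congrArg (Nat.cast (R := ℝ)) (Nat.choose_succ_right_eq n (r + 1))
    push_cast [Nat.cast_sub hrn] at h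
    linear_combination h
  simp only [esymm_eq_choose_mul_Hmc n κ, Nat.choose_one_right]
  linear_combination (-Hmc n κ (r + 2)) * hchoose

/-- If `σ_i(κ) > 0` for `1 ≤ i ≤ r+1`, then `σ_1σ_{r+1} - (r+2)σ_{r+2} > 0`; moreover
`σ_1σ_{r+1} - (r+2)σ_{r+2} = C(n,r+1)·[(r+1)H_1H_{r+1} + (n-r-1)(H_1H_{r+1} - H_{r+2})]`. -/
theorem trace_h_sq_pos (n r : ℕ) (hn : 1 ≤ n) (hr : r ≤ n - 1) (κ : Fin n → ℝ)
    (hκ : ∀ i, 1 ≤ i → i ≤ r + 1 → 0 < esymm n κ i) :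
    esymm n κ 1 * esymm n κ (r + 1) - ((r : ℝ) + 2) * esymm n κ (r + 2)
        = (n.choose (r + 1) : ℝ) *
            (((r : ℝ) + 1) * Hmc n κ 1 * Hmc n κ (r + 1)
              + ((n : ℝ) - r - 1) * (Hmc n κ 1 * Hmc n κ (r + 1) - Hmc n κ (r + 2)))
      ∧ 0 < esymm n κ 1 * esymm n κ (r + 1) - ((r : ℝ) + 2) * esymm n κ (r + 2) := by
  have hrn : r + 1 ≤ n := by omega
  have hpos : ∀ j ≤ r + 1, 0 < Hmc n κ j := by
    rintro (_ | j) hj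
    · simp [Hmc_zero]
    · exact div_pos (hκ _ (by omega) hj) (by exact_mod_cast Nat.choose_pos (by omega))
  have hH₁ := hpos 1 (by omega)
  have hHr := hpos (r + 1) le_rfl
  have hnr : (0 : ℝ) ≤ n - r - 1 := by
    rw [sub_sub, sub_nonneg]
    exact_mod_cast hrn
  rw [esymm_one_mul_sub_eq_choose_mul hrn]
  refine ⟨rfl, mul_pos (by exact_mod_cast Nat.choose_pos hrn) ?_⟩
  exact add_pos_of_pos_of_nonneg (by positivity)
    (mul_nonneg hnr (sub_nonneg.2 (Hmc_succ_le_Hmc_one_mul hpos)))
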